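/- arXiv:2110.01936 — 2 statements merged into one kernel-verified Lean document; each statement's English description precedes it below -/
import Mathlib

section
/- For every first-order sentence φ of quantifier depth at most 2 in the language of graphs, there exists a boolean combination ψ of the three properties 'G has at most one vertex', 'G is a complete graph', and 'G has a dominating vertex (a vertex adjacent to all other vertices)' such that for every connected simple graph G, G satisfies φ if and only if G satisfies ψ. -/
/-! ### First-order logic on graphs -/

/-- First-order formulas in the language of graphs (equality and one binary
adjacency relation), with free variables among `Fin n`. -/
inductive GraphFormula : ℕ → Type where
  | eq : ∀ {n : ℕ}, Fin n → Fin n → GraphFormula n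
  | adj : ∀ {n : ℕ}, Fin n → Fin n → GraphFormula n
  | not : ∀ {n : ℕ}, GraphFormula n → GraphFormula n
  | and : ∀ {n : ℕ}, GraphFormula n → GraphFormula n → GraphFormula n
  | or : ∀ {n : ℕ}, GraphFormula n → GraphFormula n → GraphFormula n
  | all : ∀ {n : ℕ}, GraphFormula (n + 1) → GraphFormula n
  | ex : ∀ {n : ℕ}, GraphFormula (n + 1) → GraphFormula n

namespace GraphFormula

/-- Quantifier depth of a formula: the maximum number of nested quantifiers. -/
def qdepth : ∀ {n : ℕ}, GraphFormula n → ℕ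
  | _, .eq _ _ => 0
  | _, .adj _ _ => 0
  | _, .not f => qdepth f
  | _, .and f g => max (qdepth f) (qdepth g)
  | _, .or f g => max (qdepth f) (qdepth g)
  | _, .all f => qdepth f + 1
  | _, .ex f => qdepth f + 1

/-- Satisfaction of a formula in a simple graph, under an assignment of the
free variables. -/
def Sat {V : Type*} (G : SimpleGraph V) : ∀ {n : ℕ}, GraphFormula n → (Fin n → V) → Prop
  | _, .eq i j, a => a i = a j
  | _, .adj i j, a => G.Adj (a i) (a j)
  | _, .not f, a => ¬ Sat G f a
  | _, .and f g, a => Sat G f a ∧ Sat G g a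
  | _, .or f g, a => Sat G f a ∨ Sat G g a
  | _, .all f, a => ∀ v, Sat G f (Fin.snoc a v)
  | _, .ex f, a => ∃ v, Sat G f (Fin.snoc a v)

/-- Existential closure: prefix a formula with one existential quantifier for
each of its free variables. -/
def exClosure : ∀ {n : ℕ}, GraphFormula n → GraphFormula 0
  | 0, f => f
  | _ + 1, f => exClosure (GraphFormula.ex f)

end GraphFormula

/-- A graph satisfies a sentence (formula with no free variables). -/
def SatSentence {V : Type*} (G : SimpleGraph V) (φ : GraphFormula 0) : Prop :=
  GraphFormula.Sat G φ Fin.elim0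

/-! ### Local certification -/

/-- A valid identifier assignment: pairwise distinct identifiers in `[1, n ^ c]`. -/
def ValidIds (c : ℕ) {n : ℕ} (ids : Fin n → ℕ) : Prop :=
  Function.Injective ids ∧ ∀ v, 1 ≤ ids v ∧ ids v ≤ n ^ c

/-- The part of the local view of a vertex `v` consisting of the
(identifier, certificate) pairs of its neighbors. -/
def neighborsView {n : ℕ} (G : SimpleGraph (Fin n)) (ids : Fin n → ℕ)
    (cert : Fin n → List Bool) (v : Fin n) : Set (ℕ × List Bool) :=
  {p | ∃ u, G.Adj v u ∧ p = (ids u, cert u)}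

/-- The part of the local view of a vertex `v`, in the presence of inputs
(labels), consisting of the (identifier, label, certificate) triples of its
neighbors. -/
def labeledNeighborsView {n : ℕ} {L : Type*} (G : SimpleGraph (Fin n)) (ids : Fin n → ℕ)
    (lab : Fin n → L) (cert : Fin n → List Bool) (v : Fin n) :
    Set (ℕ × L × List Bool) :=
  {p | ∃ u, G.Adj v u ∧ p = (ids u, lab u, cert u)}

/-! ### Rooted trees, elimination trees and treedepth -/

/-- A rooted tree on the vertex set `V`, given by its root and parent
function: every vertex reaches the root by iterating the parent map. -/
structure ElimTree (V : Type*) where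
  root : V
  parent : V → V
  parent_root : parent root = root
  reaches_root : ∀ v, ∃ j : ℕ, parent^[j] v = root

namespace ElimTree

variable {V : Type*}

/-- The depth of a vertex in a rooted tree (the root has depth 0). -/
noncomputable def depth (T : ElimTree V) (v : V) : ℕ :=
  sInf {j : ℕ | T.parent^[j] v = T.root}

/-- `u` is an ancestor of `v` (possibly `u = v`). -/
def IsAncestor (T : ElimTree V) (u v : V) : Prop :=
  ∃ j : ℕ, T.parent^[j] v = u

/-- The set of vertices of `S` in the subtree rooted at `v`. -/
def subtree (T : ElimTree V) (S : Set V) (v : V) : Set V :=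
  {x ∈ S | T.IsAncestor v x}

end ElimTree

/-- `T` is a `t`-model (elimination tree of depth at most `t`) of `G`:
every vertex has depth at most `t` and every edge of `G` joins a vertex to
one of its ancestors. -/
def IsModelOfDepth {V : Type*} (T : ElimTree V) (G : SimpleGraph V) (t : ℕ) : Prop :=
  (∀ v, T.depth v ≤ t) ∧ ∀ u v, G.Adj u v → T.IsAncestor u v ∨ T.IsAncestor v u

/-- The graph `G` has treedepth at most `t`. -/
def TreedepthLE {V : Type*} (G : SimpleGraph V) (t : ℕ) : Prop :=
  ∃ T : ElimTree V, IsModelOfDepth T G t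

/-- A model `T` of `G` is coherent if for every non-root vertex `w` (i.e.
every child `w` of a vertex of `T`), some vertex of the subtree rooted at `w`
is adjacent in `G` to the parent of `w`. -/
def Coherent {V : Type*} (T : ElimTree V) (G : SimpleGraph V) : Prop :=
  ∀ w, w ≠ T.root → ∃ x, T.IsAncestor w x ∧ G.Adj x (T.parent w)

/-! ### Types, prunings and k-reduced graphs -/

/-- The type of `v` in the induced structure on `S₁` equals the type of `w`
in the induced structure on `S₂`: there is a bijection between the subtrees
rooted at `v` and `w` preserving the tree structure, the depths, and the
ancestor vectors (adjacency in `G` to the ancestors). -/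
def SameTypeIn {V : Type*} (G : SimpleGraph V) (T : ElimTree V)
    (S₁ S₂ : Set V) (v w : V) : Prop :=
  ∃ f : V → V,
    Set.BijOn f (T.subtree S₁ v) (T.subtree S₂ w) ∧
    f v = w ∧
    (∀ x ∈ T.subtree S₁ v, x ≠ v → f (T.parent x) = T.parent (f x)) ∧
    (∀ x ∈ T.subtree S₁ v, T.depth (f x) = T.depth x ∧
      ∀ m : ℕ, G.Adj x (T.parent^[m] x) ↔ G.Adj (f x) (T.parent^[m] (f x)))

/-- Two vertices of `S` have the same type. -/
def SameType {V : Type*} (G : SimpleGraph V) (T : ElimTree V) (S : Set V) (v w : V) : Prop :=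
  SameTypeIn G T S S v w

/-- A valid pruning operation on the current vertex set `S`: `u` is a vertex
whose parent has more than `k` children (in `S`) of the same type as `u`, and
the whole subtree rooted at `u` is removed, yielding `S'`. -/
def PruneStep {V : Type*} (G : SimpleGraph V) (T : ElimTree V) (k : ℕ)
    (S : Set V) (u : V) (S' : Set V) : Prop :=
  u ∈ S ∧ u ≠ T.root ∧
  (∃ C : Set V, C ⊆ S ∧ u ∈ C ∧ C.Finite ∧ k + 1 ≤ C.ncard ∧
    (∀ w ∈ C, T.parent w = T.parent u ∧ w ≠ T.parent u) ∧
    (∀ w ∈ C, SameType G T S u w)) ∧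
  S' = S \ {x | T.IsAncestor u x}

/-- A valid pruning operation performed at a vertex of the largest possible
depth among all currently possible pruning operations. -/
def MaxPruneStep {V : Type*} (G : SimpleGraph V) (T : ElimTree V) (k : ℕ)
    (S : Set V) (u : V) (S' : Set V) : Prop :=
  PruneStep G T k S u S' ∧
    ∀ u' S'', PruneStep G T k S u' S'' → T.depth u' ≤ T.depth u

/-- A complete pruning process producing a `k`-reduced graph of `G` from the
model `T`: starting from all of `G`, valid pruning operations are applied,
always at a vertex of largest possible depth, until none applies. -/
structure PruningProcess {V : Type*} (G : SimpleGraph V) (T : ElimTree V) (k : ℕ) where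
  len : ℕ
  sets : ℕ → Set V
  prunedAt : ℕ → V
  init : sets 0 = Set.univ
  step : ∀ i < len, MaxPruneStep G T k (sets i) (prunedAt i) (sets (i + 1))
  halt : ∀ u S', ¬ PruneStep G T k (sets len) u S'

namespace PruningProcess

variable {V : Type*} {G : SimpleGraph V} {T : ElimTree V} {k : ℕ}

/-- The vertex set of the resulting `k`-reduced graph. -/
def result (P : PruningProcess G T k) : Set V := P.sets P.len

/-- The index of the step at which a vertex was deleted (the current set at
that moment still contains the vertex); for surviving vertices this is the
final index. -/
noncomputable def lastIdx (P : PruningProcess G T k) (v : V) : ℕ :=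
  sInf {i : ℕ | i = P.len ∨ v ∉ P.sets (i + 1)}

/-- The vertex set that was current when `v` was deleted (for a deleted
vertex), or the final vertex set (for a surviving vertex). -/
noncomputable def currentSet (P : PruningProcess G T k) (v : V) : Set V :=
  P.sets (P.lastIdx v)

/-- `v` and `w` have the same end type: the end type of a deleted vertex is
its type in the graph current when it was deleted, and the end type of a
surviving vertex is its type in the resulting graph. -/
def EndTypeEq (P : PruningProcess G T k) (v w : V) : Prop :=
  SameTypeIn G T (P.currentSet v) (P.currentSet w) v w

end PruningProcess

/-!
Two connected graphs that agree on the three properties cannot be told apart in the two-round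
Ehrenfeucht–Fraïssé game. In the first round Duplicator answers a dominating vertex by a dominating
one and a non-dominating vertex by a non-dominating one (one exists unless the graph is complete).
In the second round an answer to a repeated vertex is repeated, a neighbour is answered by a
neighbour (which exists by connectivity once the graph has two vertices), and a distinct
non-neighbour by a distinct non-neighbour (which exists since the first vertex is then not
dominating). Hence `φ` depends only on the three bits.
-/

namespace GraphFormula

open Fin

section EhrenfeuchtFraisse

variable {V W : Type*} (G : SimpleGraph V) (H : SimpleGraph W)

def AtomsAgree {n : ℕ} (a : Fin n → V) (b : Fin n → W) : Prop :=
  ∀ i j, (a i = a j ↔ b i = b j) ∧ (G.Adj (a i) (a j) ↔ H.Adj (b i) (b j))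

/-- Duplicator wins the `k`-round Ehrenfeucht–Fraïssé game from the position `(a, b)`. -/
def EFEquiv : ℕ → ∀ {n : ℕ}, (Fin n → V) → (Fin n → W) → Prop
  | 0, _, a, b => AtomsAgree G H a b
  | k + 1, _, a, b => AtomsAgree G H a b ∧
      (∀ v, ∃ w, EFEquiv k (snoc a v) (snoc b w)) ∧
      (∀ w, ∃ v, EFEquiv k (snoc a v) (snoc b w))

variable {G H}

theorem AtomsAgree.symm {n : ℕ} {a : Fin n → V} {b : Fin n → W} (h : AtomsAgree G H a b) :
    AtomsAgree H G b a :=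
  fun i j => ⟨(h i j).1.symm, (h i j).2.symm⟩

theorem atomsAgree_elim0 : AtomsAgree G H elim0 elim0 :=
  fun i => i.elim0

theorem AtomsAgree.snoc {n : ℕ} {a : Fin n → V} {b : Fin n → W} {v : V} {w : W}
    (hab : AtomsAgree G H a b)
    (hvw : ∀ i, (a i = v ↔ b i = w) ∧ (G.Adj (a i) v ↔ H.Adj (b i) w)) :
    AtomsAgree G H (snoc a v) (snoc b w) := by
  intro i j
  induction i using lastCases <;> induction j using lastCases <;>
    simp only [snoc_last, snoc_castSucc]
  case last.last => simp
  case last.cast j => exact ⟨eq_comm.trans ((hvw j).1.trans eq_comm), by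
    rw [G.adj_comm, H.adj_comm]; exact (hvw j).2⟩
  case cast.last i => exact hvw i
  case cast.cast i j => exact hab i j

theorem atomsAgree_pair {v v' : V} {w w' : W}
    (heq : v = v' ↔ w = w') (hadj : G.Adj v v' ↔ H.Adj w w') :
    AtomsAgree G H (snoc (snoc elim0 v) v') (snoc (snoc elim0 w) w') := by
  refine (atomsAgree_elim0.snoc fun i => i.elim0).snoc fun i => ?_
  induction i using lastCases with
  | last => simpa only [snoc_last] using ⟨heq, hadj⟩
  | cast i => exact i.elim0

theorem EFEquiv.atomsAgree {k n : ℕ} {a : Fin n → V} {b : Fin n → W} (h : EFEquiv G H k a b) :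
    AtomsAgree G H a b := by
  cases k with
  | zero => exact h
  | succ k => exact h.1

theorem EFEquiv.symm : ∀ {k n : ℕ} {a : Fin n → V} {b : Fin n → W},
    EFEquiv G H k a b → EFEquiv H G k b a
  | 0, _, _, _, h => AtomsAgree.symm h
  | _ + 1, _, _, _, ⟨hab, forth, back⟩ =>
      ⟨hab.symm, fun w => (back w).imp fun _ h => h.symm,
        fun v => (forth v).imp fun _ h => h.symm⟩

theorem sat_iff_of_efEquiv {n k : ℕ} (φ : GraphFormula n) (hk : φ.qdepth ≤ k)
    {a : Fin n → V} {b : Fin n → W} (h : EFEquiv G H k a b) : Sat G φ a ↔ Sat H φ b := by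
  induction φ generalizing k with
  | eq i j => exact (h.atomsAgree i j).1
  | adj i j => exact (h.atomsAgree i j).2
  | not f ih => exact not_congr (ih hk h)
  | and f g ihf ihg =>
    rw [qdepth, max_le_iff] at hk
    exact and_congr (ihf hk.1 h) (ihg hk.2 h)
  | or f g ihf ihg =>
    rw [qdepth, max_le_iff] at hk
    exact or_congr (ihf hk.1 h) (ihg hk.2 h)
  | all f ih =>
    obtain _ | k := k
    · simp [qdepth] at hk
    obtain ⟨-, forth, back⟩ := h
    have hf : f.qdepth ≤ k := Nat.succ_le_succ_iff.mp hk
    refine ⟨fun hG w => ?_, fun hH v => ?_⟩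
    · obtain ⟨v, hv⟩ := back w
      exact (ih hf hv).1 (hG v)
    · obtain ⟨w, hw⟩ := forth v
      exact (ih hf hw).2 (hH w)
  | ex f ih =>
    obtain _ | k := k
    · simp [qdepth] at hk
    obtain ⟨-, forth, back⟩ := h
    have hf : f.qdepth ≤ k := Nat.succ_le_succ_iff.mp hk
    refine ⟨fun ⟨v, hv⟩ => ?_, fun ⟨w, hw⟩ => ?_⟩
    · obtain ⟨w, hw⟩ := forth v
      exact ⟨w, (ih hf hw).1 hv⟩
    · obtain ⟨v, hv⟩ := back w
      exact ⟨v, (ih hf hv).2 hw⟩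

end EhrenfeuchtFraisse

section DominatingVertices

variable {V W : Type*} {G : SimpleGraph V} {H : SimpleGraph W}

def IsDominating (G : SimpleGraph V) (x : V) : Prop :=
  ∀ y, y ≠ x → G.Adj x y

theorem exists_isDominating_iff_isDominating
    (hcomplete : (∀ y z : W, y ≠ z → H.Adj y z) → ∀ y z : V, y ≠ z → G.Adj y z)
    (hdom : (∃ x, IsDominating G x) → ∃ x, IsDominating H x) (v : V) :
    ∃ w, (IsDominating G v ↔ IsDominating H w) := by
  by_cases hv : IsDominating G v
  · exact (hdom ⟨v, hv⟩).imp fun _ hw => iff_of_true hv hw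
  · have hnot : ∃ w, ¬ IsDominating H w := by
      by_contra! hall
      exact hv fun y hy => hcomplete (fun y z hyz => hall y z hyz.symm) v y hy.symm
    exact hnot.imp fun _ hw => iff_of_false hv hw

theorem exists_eq_iff_and_adj_iff (hH : H.Preconnected) (hnt : Nontrivial V → Nontrivial W)
    {v : V} {w : W} (hdom : IsDominating H w → IsDominating G v) (v' : V) :
    ∃ w', (v = v' ↔ w = w') ∧ (G.Adj v v' ↔ H.Adj w w') := by
  by_cases hvv' : v = v'
  · exact ⟨w, iff_of_true hvv' rfl, by simp [hvv']⟩
  by_cases hadj : G.Adj v v'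
  · have : Nontrivial W := hnt ⟨⟨v, v', hvv'⟩⟩
    obtain ⟨w', hw'⟩ := hH.exists_adj_of_nontrivial w
    exact ⟨w', iff_of_false hvv' hw'.ne, iff_of_true hadj hw'⟩
  · have hw : ¬ IsDominating H w := fun h => hadj (hdom h v' (Ne.symm hvv'))
    simp only [IsDominating, not_forall] at hw
    obtain ⟨w', hw'w, hnadj⟩ := hw
    exact ⟨w', iff_of_false hvv' (Ne.symm hw'w), iff_of_false hadj hnadj⟩

theorem efEquiv_one (hG : G.Preconnected) (hH : H.Preconnected)
    (hnt : Nontrivial V ↔ Nontrivial W) {v : V} {w : W}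
    (hdom : IsDominating G v ↔ IsDominating H w) :
    EFEquiv G H 1 (snoc elim0 v) (snoc elim0 w) := by
  refine ⟨atomsAgree_elim0.snoc fun i => i.elim0, fun v' => ?_, fun w' => ?_⟩
  · obtain ⟨w', heq, hadj⟩ := exists_eq_iff_and_adj_iff hH hnt.1 hdom.2 v'
    exact ⟨w', atomsAgree_pair heq hadj⟩
  · obtain ⟨v', heq, hadj⟩ := exists_eq_iff_and_adj_iff hG hnt.2 hdom.1 w'
    exact ⟨v', atomsAgree_pair heq.symm hadj.symm⟩

theorem efEquiv_two (hG : G.Preconnected) (hH : H.Preconnected)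
    (hsub : (∀ y z : V, y = z) ↔ ∀ y z : W, y = z)
    (hcomplete : (∀ y z : V, y ≠ z → G.Adj y z) ↔ ∀ y z : W, y ≠ z → H.Adj y z)
    (hdom : (∃ x, IsDominating G x) ↔ ∃ x, IsDominating H x) :
    EFEquiv G H 2 elim0 elim0 := by
  have hnt : Nontrivial V ↔ Nontrivial W := by
    simp only [← not_subsingleton_iff_nontrivial, subsingleton_iff, hsub]
  refine ⟨atomsAgree_elim0, fun v => ?_, fun w => ?_⟩
  · obtain ⟨w, hvw⟩ := exists_isDominating_iff_isDominating hcomplete.2 hdom.1 v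
    exact ⟨w, efEquiv_one hG hH hnt hvw⟩
  · obtain ⟨v, hwv⟩ := exists_isDominating_iff_isDominating hcomplete.1 hdom.2 w
    exact ⟨v, (efEquiv_one hH hG hnt.symm hwv).symm⟩

theorem satSentence_iff_of_qdepth_le_two {φ : GraphFormula 0} (hφ : φ.qdepth ≤ 2)
    (hG : G.Preconnected) (hH : H.Preconnected)
    (hsub : (∀ y z : V, y = z) ↔ ∀ y z : W, y = z)
    (hcomplete : (∀ y z : V, y ≠ z → G.Adj y z) ↔ ∀ y z : W, y ≠ z → H.Adj y z)
    (hdom : (∃ x, IsDominating G x) ↔ ∃ x, IsDominating H x) :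
    SatSentence G φ ↔ SatSentence H φ :=
  sat_iff_of_efEquiv φ hφ (efEquiv_two hG hH hsub hcomplete hdom)

end DominatingVertices

end GraphFormula

/-- Every FO sentence `φ` of quantifier depth at most `2` is, over
connected simple graphs, equivalent to a boolean combination of the three properties
"`G` has at most one vertex", "`G` is a complete graph" and "`G` has a dominating
vertex". -/
theorem qdepth2_classification (φ : GraphFormula 0) (hφ : GraphFormula.qdepth φ ≤ 2) :
    ∃ f : Bool → Bool → Bool → Bool,
      ∀ (V : Type) [Fintype V] (G : SimpleGraph V), G.Connected →
        ∀ b₁ b₂ b₃ : Bool,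
          (b₁ = true ↔ ∀ y z : V, y = z) →
          (b₂ = true ↔ ∀ y z : V, y ≠ z → G.Adj y z) →
          (b₃ = true ↔ ∃ x : V, ∀ y : V, y ≠ x → G.Adj x y) →
          (SatSentence G φ ↔ f b₁ b₂ b₃ = true) := by
  classical
  refine ⟨fun b₁ b₂ b₃ => decide (∃ (W : Type) (H : SimpleGraph W), H.Connected ∧
    (b₁ = true ↔ ∀ y z : W, y = z) ∧ (b₂ = true ↔ ∀ y z : W, y ≠ z → H.Adj y z) ∧
    (b₃ = true ↔ ∃ x, GraphFormula.IsDominating H x) ∧ SatSentence H φ), ?_⟩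
  intro V _ G hG b₁ b₂ b₃ h₁ h₂ h₃
  rw [decide_eq_true_iff]
  refine ⟨fun hφG => ⟨V, G, hG, h₁, h₂, h₃, hφG⟩, ?_⟩
  rintro ⟨W, H, hH, k₁, k₂, k₃, hφH⟩
  exact (GraphFormula.satSentence_iff_of_qdepth_le_two hφ hG.preconnected hH.preconnected
    (h₁.symm.trans k₁) (h₂.symm.trans k₂) (h₃.symm.trans k₃)).2 hφH
end

section
/- For every first-order formula ψ(x) with one free variable and quantifier depth at most 1 in the language of graphs, there exists a boolean combination χ(x) of the two properties 'x is the only vertex of G' and 'x is adjacent to every other vertex of G' such that for every connected simple graph G and every vertex x of G, ψ(x) holds in G if and only if χ(x) holds in G. -/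
/-! ### Auxiliary lemmas -/

lemma aux_qf_invariant {V V' : Type} {G : SimpleGraph V} {G' : SimpleGraph V'} :
    ∀ {n : ℕ} (f : GraphFormula n), f.qdepth = 0 →
      ∀ (a : Fin n → V) (a' : Fin n → V'),
        (∀ i j, a i = a j ↔ a' i = a' j) →
        (∀ i j, G.Adj (a i) (a j) ↔ G'.Adj (a' i) (a' j)) →
        (GraphFormula.Sat G f a ↔ GraphFormula.Sat G' f a')
  | _, .eq i j, _, a, a', he, _ => by simpa [GraphFormula.Sat] using he i j
  | _, .adj i j, _, a, a', _, ha => by simpa [GraphFormula.Sat] using ha i j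
  | _, .not f, h, a, a', he, ha => by
      have := aux_qf_invariant f (by simpa [GraphFormula.qdepth] using h) a a' he ha
      simp only [GraphFormula.Sat]; tauto
  | _, .and f g, h, a, a', he, ha => by
      simp only [GraphFormula.qdepth, Nat.max_eq_zero_iff] at h
      have h1 := aux_qf_invariant f h.1 a a' he ha
      have h2 := aux_qf_invariant g h.2 a a' he ha
      simp only [GraphFormula.Sat]; tauto
  | _, .or f g, h, a, a', he, ha => by
      simp only [GraphFormula.qdepth, Nat.max_eq_zero_iff] at h
      have h1 := aux_qf_invariant f h.1 a a' he ha
      have h2 := aux_qf_invariant g h.2 a a' he ha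
      simp only [GraphFormula.Sat]; tauto
  | _, .all f, h, _, _, _, _ => by simp [GraphFormula.qdepth] at h
  | _, .ex f, h, _, _, _, _ => by simp [GraphFormula.qdepth] at h

lemma aux_exists_neighbor {V : Type} {G : SimpleGraph V} (hG : G.Connected) {x y : V}
    (hxy : y ≠ x) : ∃ z, G.Adj x z := by
  obtain ⟨w⟩ := hG.preconnected x y
  cases w with
  | nil => exact absurd rfl hxy
  | cons h p => exact ⟨_, h⟩

lemma aux_realize {V V' : Type} {G : SimpleGraph V} {G' : SimpleGraph V'}
    (hG' : G'.Connected) (x : V) (x' : V')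
    (hb1 : (∀ y, y = x) ↔ (∀ y', y' = x'))
    (hb2 : (∀ y, y ≠ x → G.Adj x y) ↔ (∀ y', y' ≠ x' → G'.Adj x' y'))
    (y : V) : ∃ y' : V', (y = x ↔ y' = x') ∧ (G.Adj x y ↔ G'.Adj x' y') := by
  by_cases h1 : y = x
  · exact ⟨x', by simp [h1, SimpleGraph.irrefl]⟩
  · by_cases h2 : G.Adj x y
    · have hne : ¬ ∀ y', y' = x' := fun hall => h1 (hb1.mpr hall y)
      obtain ⟨y'', hy''⟩ := not_forall.mp hne
      obtain ⟨z', hz'⟩ := aux_exists_neighbor hG' hy''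
      exact ⟨z', by simp [h1, hz'.ne', h2, hz']⟩
    · have hne : ¬ ∀ y', y' ≠ x' → G'.Adj x' y' := fun hall => h2 (hb2.mpr hall y h1)
      push_neg at hne
      obtain ⟨y', hy1, hy2⟩ := hne
      exact ⟨y', by simp [h1, hy1, h2, hy2]⟩

lemma aux_qf_snoc {V V' : Type} {G : SimpleGraph V} {G' : SimpleGraph V'}
    (f : GraphFormula 2) (hf : f.qdepth = 0) {x y : V} {x' y' : V'}
    (he : y = x ↔ y' = x') (ha : G.Adj x y ↔ G'.Adj x' y') :
    GraphFormula.Sat G f (Fin.snoc (fun _ => x) y) ↔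
      GraphFormula.Sat G' f (Fin.snoc (fun _ => x') y') := by
  apply aux_qf_invariant f hf
  · intro i j
    fin_cases i <;> fin_cases j <;> simp [Fin.snoc]
    · exact ⟨fun h => (he.mp h.symm).symm, fun h => (he.mpr h.symm).symm⟩
    · exact he
  · intro i j
    fin_cases i <;> fin_cases j <;> simp [Fin.snoc, SimpleGraph.irrefl]
    · exact ha
    · simpa [SimpleGraph.adj_comm] using ha

lemma aux_depth1 {V V' : Type} {G : SimpleGraph V} {G' : SimpleGraph V'}
    (hG : G.Connected) (hG' : G'.Connected) (x : V) (x' : V')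
    (hb1 : (∀ y, y = x) ↔ (∀ y', y' = x'))
    (hb2 : (∀ y, y ≠ x → G.Adj x y) ↔ (∀ y', y' ≠ x' → G'.Adj x' y')) :
    ∀ (ψ : GraphFormula 1), ψ.qdepth ≤ 1 →
      (GraphFormula.Sat G ψ (fun _ => x) ↔ GraphFormula.Sat G' ψ (fun _ => x'))
  | .eq i j, _ => by simp [GraphFormula.Sat, Subsingleton.elim i j]
  | .adj i j, _ => by simp [GraphFormula.Sat, Subsingleton.elim i j, SimpleGraph.irrefl]
  | .not f, h => by
      have := aux_depth1 hG hG' x x' hb1 hb2 f (by simpa [GraphFormula.qdepth] using h)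
      simp only [GraphFormula.Sat]; tauto
  | .and f g, h => by
      simp only [GraphFormula.qdepth, max_le_iff] at h
      have h1 := aux_depth1 hG hG' x x' hb1 hb2 f h.1
      have h2 := aux_depth1 hG hG' x x' hb1 hb2 g h.2
      simp only [GraphFormula.Sat]; tauto
  | .or f g, h => by
      simp only [GraphFormula.qdepth, max_le_iff] at h
      have h1 := aux_depth1 hG hG' x x' hb1 hb2 f h.1
      have h2 := aux_depth1 hG hG' x x' hb1 hb2 g h.2
      simp only [GraphFormula.Sat]; tauto
  | .all f, h => by
      have hf : f.qdepth = 0 := by simp only [GraphFormula.qdepth] at h; omega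
      simp only [GraphFormula.Sat]
      constructor
      · intro H y'
        obtain ⟨y, he, ha⟩ := aux_realize hG x' x hb1.symm hb2.symm y'
        exact (aux_qf_snoc f hf he.symm ha.symm).mp (H y)
      · intro H y
        obtain ⟨y', he, ha⟩ := aux_realize hG' x x' hb1 hb2 y
        exact (aux_qf_snoc f hf he ha).mpr (H y')
  | .ex f, h => by
      have hf : f.qdepth = 0 := by simp only [GraphFormula.qdepth] at h; omega
      simp only [GraphFormula.Sat]
      constructor
      · rintro ⟨y, hy⟩
        obtain ⟨y', he, ha⟩ := aux_realize hG' x x' hb1 hb2 y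
        exact ⟨y', (aux_qf_snoc f hf he ha).mp hy⟩
      · rintro ⟨y', hy'⟩
        obtain ⟨y, he, ha⟩ := aux_realize hG x' x hb1.symm hb2.symm y'
        exact ⟨y, (aux_qf_snoc f hf he.symm ha.symm).mpr hy'⟩

/-- Every FO formula `ψ(x)` with one free variable and quantifier
depth at most `1` is, over connected simple graphs, equivalent to a boolean combination
of the two properties "`x` is the only vertex of `G`" and "`x` is adjacent to every
other vertex of `G`". -/
theorem qdepth1_one_free_variable_classification
    (ψ : GraphFormula 1) (hψ : GraphFormula.qdepth ψ ≤ 1) :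
    ∃ f : Bool → Bool → Bool,
      ∀ (V : Type) [Fintype V] (G : SimpleGraph V), G.Connected →
        ∀ (x : V) (b₁ b₂ : Bool),
          (b₁ = true ↔ ∀ y : V, y = x) →
          (b₂ = true ↔ ∀ y : V, y ≠ x → G.Adj x y) →
          (GraphFormula.Sat G ψ (fun _ => x) ↔ f b₁ b₂ = true) := by
  classical
  refine ⟨fun b₁ b₂ =>
    if b₁ then decide (GraphFormula.Sat (SimpleGraph.pathGraph 1) ψ (fun _ => 0))
    else if b₂ then decide (GraphFormula.Sat (SimpleGraph.pathGraph 2) ψ (fun _ => 0))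
    else decide (GraphFormula.Sat (SimpleGraph.pathGraph 3) ψ (fun _ => 0)), ?_⟩
  intro V _ G hG x b₁ b₂ h1 h2
  cases b₁ with
  | true =>
    have hall : ∀ y, y = x := h1.mp rfl
    have key := aux_depth1 hG (SimpleGraph.pathGraph_connected 0) x (0 : Fin 1)
      (iff_of_true hall (fun y => by omega))
      (iff_of_true (fun y hy => absurd (hall y) hy)
        (fun y hy => absurd (by omega : y = 0) hy)) ψ hψ
    rw [key]
    simp
  | false =>
    have hnall : ¬ ∀ y, y = x := fun h => by simpa using h1.mpr h
    cases b₂ with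
    | true =>
      have hadj : ∀ y, y ≠ x → G.Adj x y := h2.mp rfl
      have key := aux_depth1 hG (SimpleGraph.pathGraph_connected 1) x (0 : Fin 2)
        (iff_of_false hnall (fun h => absurd (h 1) (by decide)))
        (iff_of_true hadj (by
          intro y hy
          fin_cases y
          · exact absurd rfl hy
          · exact SimpleGraph.pathGraph_adj.mpr (Or.inl rfl))) ψ hψ
      rw [key]
      simp
    | false =>
      have hnadj : ¬ ∀ y, y ≠ x → G.Adj x y := fun h => by simpa using h2.mpr h
      have key := aux_depth1 hG (SimpleGraph.pathGraph_connected 2) x (0 : Fin 3)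
        (iff_of_false hnall (fun h => absurd (h 1) (by decide)))
        (iff_of_false hnadj (fun h => absurd (h 2 (by decide))
          (by rw [SimpleGraph.pathGraph_adj]; decide))) ψ hψ
      rw [key]
      simp
end
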